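/- arXiv:2605.11558 — 4 statements merged into one kernel-verified Lean document; each statement's English description precedes it below -/
import Mathlib

section
/- Let σ(x) = 1/(1+exp(-x)) and ψ(x) = tanh(x), and define HTAF(x | α₀, α₁) = σ(α₁ ψ(α₀ x)). For any ε ∈ (0, 1/2), if α₁ > log((1-ε)/ε) and α₀ ≥ (1/(2ε)) · log( (α₁ + log((1-ε)/ε)) / (α₁ - log((1-ε)/ε)) ), then for all x ≥ ε, |1 - HTAF(x | α₀, α₁)| ≤ ε. -/
noncomputable def sigmoid (x : ℝ) : ℝ := 1 / (1 + Real.exp (-x))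

noncomputable def HTAF (α₀ α₁ x : ℝ) : ℝ := sigmoid (α₁ * Real.tanh (α₀ * x))

open Real hiding sigmoid
open Set

/- The threshold on `α₀` is `artanh (L / α₁) / ε` with `L = log ((1 - ε) / ε)`, and `L` is the
logit of `1 - ε`. So for `x ≥ ε` we get `tanh (α₀ x) ≥ L / α₁`, hence `α₁ tanh (α₀ x) ≥ L` and, by
monotonicity of the sigmoid, `HTAF x ≥ σ L = 1 - ε`. -/

lemma sigmoid_eq_real_sigmoid : sigmoid = Real.sigmoid := by
  funext x
  rw [sigmoid, Real.sigmoid_def, one_div]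

lemma Real.sigmoid_log_one_sub_div {ε : ℝ} (hε : ε ∈ Ioo (0 : ℝ) 1) :
    Real.sigmoid (log ((1 - ε) / ε)) = 1 - ε := by
  obtain ⟨hε0, hε1⟩ := hε
  have h1ε : 0 < 1 - ε := by linarith
  rw [Real.sigmoid_def, exp_neg, exp_log (div_pos h1ε hε0)]
  field_simp
  ring

lemma Real.abs_one_sub_sigmoid_le {ε t : ℝ} (hε : ε ∈ Ioo (0 : ℝ) 1)
    (ht : log ((1 - ε) / ε) ≤ t) : |1 - Real.sigmoid t| ≤ ε := by
  have hle : 1 - ε ≤ Real.sigmoid t := Real.sigmoid_log_one_sub_div hε ▸ Real.sigmoid_le ht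
  rw [abs_of_pos (sub_pos.mpr (Real.sigmoid_lt_one t))]
  linarith

lemma Real.le_tanh_of_artanh_le {c y : ℝ} (hc : c < 1) (hy : artanh c ≤ y) : c ≤ tanh y := by
  rcases le_or_gt c (-1) with hc' | hc'
  · exact hc'.trans (neg_one_lt_tanh y).le
  · rwa [← artanh_le_artanh_iff ⟨hc', hc⟩ ⟨neg_one_lt_tanh y, tanh_lt_one y⟩, artanh_tanh]

lemma Real.artanh_div_eq_half_log {a b : ℝ} (hab : |b| < a) :
    artanh (b / a) = 1 / 2 * log ((a + b) / (a - b)) := by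
  obtain ⟨hba, hb⟩ := abs_lt.mp hab
  have ha : 0 < a := by linarith
  have hmem : b / a ∈ Icc (-1 : ℝ) 1 :=
    ⟨by rw [le_div_iff₀ ha]; linarith, by rw [div_le_iff₀ ha]; linarith⟩
  rw [artanh_eq_half_log hmem]
  congr 2
  field_simp

theorem stmt_0 (ε α₀ α₁ : ℝ) (hε : ε ∈ Set.Ioo (0:ℝ) (1/2))
    (hα₁ : α₁ > Real.log ((1 - ε) / ε))
    (hα₀ : α₀ ≥ (1 / (2 * ε)) *
      Real.log ((α₁ + Real.log ((1 - ε) / ε)) / (α₁ - Real.log ((1 - ε) / ε)))) :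
    ∀ x : ℝ, x ≥ ε → |1 - HTAF α₀ α₁ x| ≤ ε := by
  intro x hx
  obtain ⟨hε0, hε2⟩ := hε
  set L := log ((1 - ε) / ε)
  have hL : 0 < L := log_pos (by rw [lt_div_iff₀ hε0]; linarith)
  have hα₁0 : 0 < α₁ := hL.trans hα₁
  have hLα₁ : L / α₁ < 1 := (div_lt_one hα₁0).mpr hα₁
  set θ := 1 / (2 * ε) * log ((α₁ + L) / (α₁ - L)) with hθ_def
  have hartanh : artanh (L / α₁) = θ * ε := by
    rw [artanh_div_eq_half_log (by rwa [abs_of_pos hL]), hθ_def]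
    field_simp
  have hθ : 0 ≤ θ :=
    nonneg_of_mul_nonneg_left (hartanh ▸ artanh_nonneg (div_pos hL hα₁0).le) hε0
  have htanh : L / α₁ ≤ tanh (α₀ * x) :=
    le_tanh_of_artanh_le hLα₁ (hartanh ▸ mul_le_mul hα₀ hx hε0.le (hθ.trans hα₀))
  rw [HTAF, sigmoid_eq_real_sigmoid]
  refine abs_one_sub_sigmoid_le ⟨hε0, by linarith⟩ ?_
  calc L = α₁ * (L / α₁) := by field_simp
    _ ≤ α₁ * tanh (α₀ * x) := by gcongr
end

section
/- For any positive reals α₀, α₁, the ratio (d/dx HTAF(x | α₀, α₁)) / exp(-2 α₀ x) converges, as x → ∞, to a finite positive limit depending only on α₀ and α₁ (namely 4 α₀ α₁ σ(α₁)(1 - σ(α₁))). In particular the gradient of HTAF decays exactly at the exponential rate exp(-2 α₀ x) in the right tail. -/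
open Filter

lemma one_add_exp_pos (y : ℝ) : 0 < 1 + Real.exp (-y) := by positivity

lemma sigmoid_hasDerivAt (y : ℝ) :
    HasDerivAt sigmoid (sigmoid y * (1 - sigmoid y)) y := by
  have hne : (1 + Real.exp (-y)) ≠ 0 := (one_add_exp_pos y).ne'
  have h : HasDerivAt (fun z : ℝ => 1 + Real.exp (-z)) (-Real.exp (-y)) y := by
    have := ((Real.hasDerivAt_exp (-y)).comp y (hasDerivAt_neg y)).const_add 1
    simpa using this
  have h2 := h.inv hne
  have : HasDerivAt sigmoid (-(-Real.exp (-y)) / (1 + Real.exp (-y)) ^ 2) y := by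
    have e : sigmoid = (fun z : ℝ => 1 + Real.exp (-z))⁻¹ := by
      funext z; simp [sigmoid, one_div]
    rw [e]; exact h2
  convert this using 1
  have he := Real.exp_ne_zero (-y)
  simp only [sigmoid]
  field_simp
  ring

lemma tanh_hasDerivAt (t : ℝ) :
    HasDerivAt Real.tanh (1 / Real.cosh t ^ 2) t := by
  have h := (Real.hasDerivAt_sinh t).div (Real.hasDerivAt_cosh t) (Real.cosh_pos t).ne'
  have heq : (Real.cosh t * Real.cosh t - Real.sinh t * Real.sinh t) / Real.cosh t ^ 2
      = 1 / Real.cosh t ^ 2 := by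
    rw [show Real.cosh t * Real.cosh t - Real.sinh t * Real.sinh t
        = Real.cosh t ^ 2 - Real.sinh t ^ 2 by ring, Real.cosh_sq_sub_sinh_sq]
  have : HasDerivAt (fun x => Real.sinh x / Real.cosh x) (1 / Real.cosh t ^ 2) t := heq ▸ h
  convert this using 1
  funext z; rw [Real.tanh_eq_sinh_div_cosh]

lemma HTAF_hasDerivAt (α₀ α₁ x : ℝ) :
    HasDerivAt (fun y => HTAF α₀ α₁ y)
      (sigmoid (α₁ * Real.tanh (α₀ * x)) * (1 - sigmoid (α₁ * Real.tanh (α₀ * x)))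
        * (α₁ * (1 / Real.cosh (α₀ * x) ^ 2 * α₀))) x := by
  have h1 : HasDerivAt (fun y : ℝ => α₀ * y) α₀ x := by
    simpa using (hasDerivAt_id x).const_mul α₀
  have h2 : HasDerivAt (fun y : ℝ => Real.tanh (α₀ * y))
      (1 / Real.cosh (α₀ * x) ^ 2 * α₀) x := (tanh_hasDerivAt (α₀ * x)).comp x h1
  have h3 := h2.const_mul α₁
  exact (sigmoid_hasDerivAt (α₁ * Real.tanh (α₀ * x))).comp x h3

lemma tanh_eq' (t : ℝ) :
    Real.tanh t = (1 - Real.exp (-2 * t)) / (1 + Real.exp (-2 * t)) := by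
  rw [Real.tanh_eq_sinh_div_cosh, Real.sinh_eq, Real.cosh_eq]
  have h1 : Real.exp (-2 * t) = Real.exp (-t) * Real.exp (-t) := by
    rw [← Real.exp_add]; ring_nf
  have h2 : Real.exp t * Real.exp (-t) = 1 := by
    rw [← Real.exp_add]; simp
  have hpos : 0 < Real.exp t + Real.exp (-t) := by positivity
  rw [div_eq_div_iff (by positivity) (by positivity)]
  rw [h1]
  ring_nf
  nlinarith [h2, Real.exp_pos t, Real.exp_pos (-t)]

lemma cosh_ratio (t : ℝ) :
    (1 / Real.cosh t ^ 2) / Real.exp (-2 * t)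
      = 4 / (1 + Real.exp (-2 * t)) ^ 2 := by
  rw [Real.cosh_eq]
  have h1 : Real.exp (-2 * t) = Real.exp (-t) * Real.exp (-t) := by
    rw [← Real.exp_add]; ring_nf
  have h2 : Real.exp t * Real.exp (-t) = 1 := by
    rw [← Real.exp_add]; simp
  have hp1 := Real.exp_pos t
  have hp2 := Real.exp_pos (-t)
  rw [h1]
  rw [div_eq_div_iff (by positivity) (by positivity)]
  field_simp
  nlinarith [h2, sq_nonneg (Real.exp t), sq_nonneg (Real.exp (-t))]

theorem stmt_5 (α₀ α₁ : ℝ) (h₀ : 0 < α₀) (h₁ : 0 < α₁) :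
    Filter.Tendsto (fun x => deriv (fun y => HTAF α₀ α₁ y) x / Real.exp (-2 * α₀ * x))
      Filter.atTop
      (nhds (4 * α₀ * α₁ * sigmoid α₁ * (1 - sigmoid α₁))) ∧
    0 < 4 * α₀ * α₁ * sigmoid α₁ * (1 - sigmoid α₁) := by
  have hσpos : ∀ y : ℝ, 0 < sigmoid y := by
    intro y; unfold sigmoid; positivity
  have hσlt : ∀ y : ℝ, sigmoid y < 1 := by
    intro y
    unfold sigmoid
    rw [div_lt_one (one_add_exp_pos y)]
    linarith [Real.exp_pos (-y)]
  constructor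
  · -- continuity of sigmoid
    have hc : Continuous sigmoid := by
      unfold sigmoid
      exact continuous_const.div
        (continuous_const.add (Real.continuous_exp.comp continuous_neg))
        (fun y => (one_add_exp_pos y).ne')
    -- exp (-2 α₀ x) → 0
    have hE : Tendsto (fun x => Real.exp (-2 * α₀ * x)) atTop (nhds 0) := by
      have h1 : Tendsto (fun x : ℝ => -2 * α₀ * x) atTop atBot := by
        have h2 : Tendsto (fun x : ℝ => (2 * α₀) * x) atTop atTop :=
          Tendsto.const_mul_atTop (by positivity) tendsto_id
        exact (tendsto_neg_atTop_atBot.comp h2).congr (fun x => by simp only [Function.comp_apply]; ring)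
      exact Real.tendsto_exp_atBot.comp h1
    -- tanh (α₀ x) → 1
    have hT : Tendsto (fun x => Real.tanh (α₀ * x)) atTop (nhds 1) := by
      have heq : ∀ x, Real.tanh (α₀ * x)
          = (1 - Real.exp (-2 * α₀ * x)) / (1 + Real.exp (-2 * α₀ * x)) := by
        intro x
        rw [tanh_eq' (α₀ * x)]
        ring_nf
      rw [tendsto_congr heq]
      have hone : Tendsto (fun _ : ℝ => (1 : ℝ)) atTop (nhds 1) := tendsto_const_nhds
      have := (hone.sub hE).div (hone.add hE) (by norm_num : (1 : ℝ) + 0 ≠ 0)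
      convert this using 2 <;> norm_num [Pi.div_def]
    -- sigmoid (α₁ tanh (α₀ x)) → sigmoid α₁
    have hS : Tendsto (fun x => sigmoid (α₁ * Real.tanh (α₀ * x))) atTop
        (nhds (sigmoid α₁)) := by
      have : Tendsto (fun x => α₁ * Real.tanh (α₀ * x)) atTop (nhds (α₁ * 1)) :=
        tendsto_const_nhds.mul hT
      rw [mul_one] at this
      exact (hc.tendsto α₁).comp this
    -- rewrite the ratio
    have key : ∀ x, deriv (fun y => HTAF α₀ α₁ y) x / Real.exp (-2 * α₀ * x)
        = sigmoid (α₁ * Real.tanh (α₀ * x)) * (1 - sigmoid (α₁ * Real.tanh (α₀ * x)))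
          * (α₁ * α₀) * (4 / (1 + Real.exp (-2 * α₀ * x)) ^ 2) := by
      intro x
      rw [(HTAF_hasDerivAt α₀ α₁ x).deriv]
      have hcr := cosh_ratio (α₀ * x)
      have harg : -2 * (α₀ * x) = -2 * α₀ * x := by ring
      rw [harg] at hcr
      have step : sigmoid (α₁ * Real.tanh (α₀ * x)) * (1 - sigmoid (α₁ * Real.tanh (α₀ * x)))
            * (α₁ * (1 / Real.cosh (α₀ * x) ^ 2 * α₀)) / Real.exp (-2 * α₀ * x)
          = sigmoid (α₁ * Real.tanh (α₀ * x)) * (1 - sigmoid (α₁ * Real.tanh (α₀ * x)))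
            * (α₁ * α₀) * ((1 / Real.cosh (α₀ * x) ^ 2) / Real.exp (-2 * α₀ * x)) := by
        ring
      rw [step, hcr]
    rw [tendsto_congr key]
    have hlim : Tendsto (fun x => sigmoid (α₁ * Real.tanh (α₀ * x))
          * (1 - sigmoid (α₁ * Real.tanh (α₀ * x))) * (α₁ * α₀)
          * (4 / (1 + Real.exp (-2 * α₀ * x)) ^ 2)) atTop
        (nhds (sigmoid α₁ * (1 - sigmoid α₁) * (α₁ * α₀) * (4 / (1 + 0) ^ 2))) := by
      refine ((hS.mul (tendsto_const_nhds.sub hS)).mul tendsto_const_nhds).mul ?_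
      exact tendsto_const_nhds.div (((tendsto_const_nhds.add hE)).pow 2) (by norm_num)
    convert hlim using 2
    ring
  · have ha := hσpos α₁
    have hb : 0 < 1 - sigmoid α₁ := by linarith [hσlt α₁]
    positivity
end

section
/- Let X be a real-valued random vector with distribution P, and let h₁, …, h_{n₁} : ℝ^d → ℝ be affine functions (the pre-activations of a one-hidden-layer network). Suppose there exist ε ∈ (0, 1/2) and C > 0 such that P(|h_j(X)| < ε) ≤ C ε for every j ∈ {1, …, n₁}, and suppose α₀, α₁ satisfy the HTAF approximation condition so that |σ_H(z) - HTAF(z | α₀, α₁)| ≤ ε whenever |z| ≥ ε. Let f(x) = Σ_{j=1}^{n₁} w_j σ_H(h_j(x)) and g(x) = Σ_{j=1}^{n₁} w_j HTAF(h_j(x) | α₀, α₁) with weights w ∈ ℝ^{n₁}. Then E[|f(X) - g(X)|] ≤ n₁ · ‖w‖_∞ · (1 + C) · ε. -/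
noncomputable def heaviside (x : ℝ) : ℝ := if 0 ≤ x then 1 else 0

lemma sigmoid_mem : ∀ x : ℝ, sigmoid x ∈ Set.Icc (0:ℝ) 1 := by
  intro x
  have h1 : 0 < 1 + Real.exp (-x) := by positivity
  constructor
  · unfold sigmoid; positivity
  · unfold sigmoid
    rw [div_le_one h1]
    have := (Real.exp_pos (-x)).le
    linarith

lemma heaviside_mem : ∀ x : ℝ, heaviside x ∈ Set.Icc (0:ℝ) 1 := by
  intro x
  unfold heaviside
  split <;> simp

lemma diff_le_one (α₀ α₁ z : ℝ) : |heaviside z - HTAF α₀ α₁ z| ≤ 1 := by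
  have h1 := heaviside_mem z
  have h2 := sigmoid_mem (α₁ * Real.tanh (α₀ * z))
  unfold HTAF
  rw [abs_sub_le_iff]
  constructor <;> [skip; skip] <;>
    simp only [Set.mem_Icc] at h1 h2 <;> linarith [h1.1, h1.2, h2.1, h2.2]

lemma meas_heaviside : Measurable heaviside := by
  unfold heaviside
  exact Measurable.ite (measurableSet_le measurable_const measurable_id)
    measurable_const measurable_const

lemma cont_tanh : Continuous Real.tanh := by
  have : Real.tanh = fun x => Real.sinh x / Real.cosh x :=
    funext fun x => Real.tanh_eq_sinh_div_cosh x
  rw [this]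
  exact Real.continuous_sinh.div Real.continuous_cosh fun x => (Real.cosh_pos x).ne'

lemma cont_HTAF (α₀ α₁ : ℝ) : Continuous (HTAF α₀ α₁) := by
  unfold HTAF sigmoid
  apply Continuous.div continuous_const
  · exact continuous_const.add ((Real.continuous_exp.comp (continuous_neg.comp
      (continuous_const.mul (cont_tanh.comp (continuous_const.mul continuous_id))))))
  · intro x
    have : 0 < 1 + Real.exp (-(α₁ * Real.tanh (α₀ * x))) := by positivity
    exact ne_of_gt this

theorem stmt_13 (d n₁ : ℕ) (μ : MeasureTheory.Measure (Fin d → ℝ))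
    [MeasureTheory.IsProbabilityMeasure μ]
    (h : Fin n₁ → ((Fin d → ℝ) →ᵃ[ℝ] ℝ))
    (ε C α₀ α₁ : ℝ) (hε : ε ∈ Set.Ioo (0:ℝ) (1/2)) (hC : 0 < C)
    (h₀ : 0 < α₀) (h₁ : 0 < α₁)
    (htail : ∀ j : Fin n₁, μ {x | |h j x| < ε} ≤ ENNReal.ofReal (C * ε))
    (happrox : ∀ z : ℝ, |z| ≥ ε → |heaviside z - HTAF α₀ α₁ z| ≤ ε)
    (w : Fin n₁ → ℝ) :
    ∫ x, |(∑ j, w j * heaviside (h j x)) - (∑ j, w j * HTAF α₀ α₁ (h j x))| ∂μ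
      ≤ (n₁ : ℝ) * ‖w‖ * (1 + C) * ε := by
  have hε0 : 0 < ε := hε.1
  -- measurability of h j
  have hcont : ∀ j, Continuous (fun x => h j x) := fun j =>
    (h j).continuous_of_finiteDimensional
  set φ : Fin n₁ → (Fin d → ℝ) → ℝ :=
    fun j x => heaviside (h j x) - HTAF α₀ α₁ (h j x) with hφ
  have hφmeas : ∀ j, Measurable (φ j) := by
    intro j
    exact (meas_heaviside.comp (hcont j).measurable).sub
      (((cont_HTAF α₀ α₁).measurable).comp (hcont j).measurable)
  have hφbd : ∀ j x, |φ j x| ≤ 1 := fun j x => diff_le_one _ _ _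
  have hφint : ∀ j, MeasureTheory.Integrable (φ j) μ := by
    intro j
    refine MeasureTheory.Integrable.mono' (MeasureTheory.integrable_const 1)
      (hφmeas j).aestronglyMeasurable ?_
    filter_upwards with x
    simpa [Real.norm_eq_abs] using hφbd j x
  -- per-j integral bound
  have key : ∀ j, ∫ x, |φ j x| ∂μ ≤ (1 + C) * ε := by
    intro j
    set A : Set (Fin d → ℝ) := {x | |h j x| < ε} with hA
    have hAmeas : MeasurableSet A :=
      measurableSet_lt ((continuous_abs.comp (hcont j)).measurable) measurable_const
    have habsint : MeasureTheory.Integrable (fun x => |φ j x|) μ := (hφint j).abs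
    have hsplit : ∫ x, |φ j x| ∂μ
        = (∫ x in A, |φ j x| ∂μ) + ∫ x in Aᶜ, |φ j x| ∂μ :=
      (MeasureTheory.integral_add_compl hAmeas habsint).symm
    have hμA : (μ A).toReal ≤ C * ε := by
      have := htail j
      calc (μ A).toReal ≤ (ENNReal.ofReal (C * ε)).toReal :=
            ENNReal.toReal_mono ENNReal.ofReal_ne_top this
        _ = C * ε := ENNReal.toReal_ofReal (by positivity)
    have hμAc : (μ Aᶜ).toReal ≤ 1 := by
      have h1 : μ Aᶜ ≤ 1 := MeasureTheory.prob_le_one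
      calc (μ Aᶜ).toReal ≤ (1 : ENNReal).toReal :=
            ENNReal.toReal_mono (by simp) h1
        _ = 1 := by simp
    have hIA : ∫ x in A, |φ j x| ∂μ ≤ 1 * (μ A).toReal := by
      have := MeasureTheory.norm_setIntegral_le_of_norm_le_const
        (C := 1) (μ := μ) (s := A) (f := fun x => |φ j x|)
        (lt_of_le_of_lt (MeasureTheory.prob_le_one) (by simp))
        (fun x _ => by simpa [Real.norm_eq_abs, abs_abs] using hφbd j x)
      calc ∫ x in A, |φ j x| ∂μ ≤ ‖∫ x in A, |φ j x| ∂μ‖ := le_abs_self _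
        _ ≤ 1 * (μ A).toReal := this
    have hIAc : ∫ x in Aᶜ, |φ j x| ∂μ ≤ ε * (μ Aᶜ).toReal := by
      have := MeasureTheory.norm_setIntegral_le_of_norm_le_const
        (C := ε) (μ := μ) (s := Aᶜ) (f := fun x => |φ j x|)
        (lt_of_le_of_lt (MeasureTheory.prob_le_one) (by simp))
        (fun x hx => by
          have hxA : ¬ |h j x| < ε := hx
          simpa [Real.norm_eq_abs, abs_abs] using happrox (h j x) (le_of_not_gt hxA))
      calc ∫ x in Aᶜ, |φ j x| ∂μ ≤ ‖∫ x in Aᶜ, |φ j x| ∂μ‖ := le_abs_self _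
        _ ≤ ε * (μ Aᶜ).toReal := this
    have hεnn : (0:ℝ) ≤ ε := hε0.le
    calc ∫ x, |φ j x| ∂μ = (∫ x in A, |φ j x| ∂μ) + ∫ x in Aᶜ, |φ j x| ∂μ := hsplit
      _ ≤ 1 * (μ A).toReal + ε * (μ Aᶜ).toReal := add_le_add hIA hIAc
      _ ≤ 1 * (C * ε) + ε * 1 := by
          gcongr
      _ = (1 + C) * ε := by ring
  -- main bound
  have hrw : ∀ x, (∑ j, w j * heaviside (h j x)) - (∑ j, w j * HTAF α₀ α₁ (h j x))
      = ∑ j, w j * φ j x := by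
    intro x
    rw [← Finset.sum_sub_distrib]
    congr 1; ext j; simp only [hφ]; ring
  have hint_major : MeasureTheory.Integrable (fun x => ∑ j, |w j| * |φ j x|) μ := by
    apply MeasureTheory.integrable_finset_sum
    intro j _
    exact ((hφint j).abs.const_mul _)
  have hstep1 : ∫ x, |(∑ j, w j * heaviside (h j x)) - (∑ j, w j * HTAF α₀ α₁ (h j x))| ∂μ
      ≤ ∫ x, ∑ j, |w j| * |φ j x| ∂μ := by
    apply MeasureTheory.integral_mono_of_nonneg
    · filter_upwards with x; positivity
    · exact hint_major
    · filter_upwards with x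
      rw [hrw x]
      calc |∑ j, w j * φ j x| ≤ ∑ j, |w j * φ j x| := Finset.abs_sum_le_sum_abs _ _
        _ = ∑ j, |w j| * |φ j x| := by simp [abs_mul]
  have hstep2 : ∫ x, ∑ j, |w j| * |φ j x| ∂μ = ∑ j, |w j| * ∫ x, |φ j x| ∂μ := by
    rw [MeasureTheory.integral_finset_sum]
    · congr 1; ext j
      exact MeasureTheory.integral_const_mul _ _
    · intro j _; exact ((hφint j).abs.const_mul _)
  have hwj : ∀ j, |w j| ≤ ‖w‖ := by
    intro j
    simpa [Real.norm_eq_abs] using norm_le_pi_norm w j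
  have hw0 : (0:ℝ) ≤ ‖w‖ := norm_nonneg w
  calc ∫ x, |(∑ j, w j * heaviside (h j x)) - (∑ j, w j * HTAF α₀ α₁ (h j x))| ∂μ
      ≤ ∫ x, ∑ j, |w j| * |φ j x| ∂μ := hstep1
    _ = ∑ j, |w j| * ∫ x, |φ j x| ∂μ := hstep2
    _ ≤ ∑ j : Fin n₁, ‖w‖ * ((1 + C) * ε) := by
        apply Finset.sum_le_sum
        intro j _
        have hnn : 0 ≤ ∫ x, |φ j x| ∂μ :=
          MeasureTheory.integral_nonneg (fun x => abs_nonneg _)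
        exact mul_le_mul (hwj j) (key j) hnn hw0
    _ = (n₁ : ℝ) * ‖w‖ * (1 + C) * ε := by
        rw [Finset.sum_const, Finset.card_univ, Fintype.card_fin, nsmul_eq_mul]; ring
end

section
/- Let ψ = tanh and let ε ∈ (0,1/2), α₁ > L := log((1-ε)/ε), and α₀ ≥ (1/(2ε)) log((α₁+L)/(α₁-L)). Then for every x ≥ ε, α₁ tanh(α₀ x) ≥ L. Equivalently, tanh(α₀ ε) ≥ L/α₁. -/
lemma tanh_eq_exp (t : ℝ) :
    Real.tanh t = (Real.exp (2*t) - 1) / (Real.exp (2*t) + 1) := by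
  rw [Real.tanh_eq_sinh_div_cosh, Real.sinh_eq, Real.cosh_eq]
  have h1 : Real.exp t ≠ 0 := (Real.exp_pos t).ne'
  rw [Real.exp_neg, two_mul, Real.exp_add]
  field_simp

lemma tanh_ge_of_exp {t c : ℝ} (hc : c < 1)
    (h : Real.exp (2*t) ≥ (1 + c) / (1 - c)) :
    Real.tanh t ≥ c := by
  rw [tanh_eq_exp]
  have hE : Real.exp (2*t) + 1 > 0 := by positivity
  rw [ge_iff_le, le_div_iff₀ hE]
  have h1c : (0:ℝ) < 1 - c := by linarith
  rw [ge_iff_le, div_le_iff₀ h1c] at h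
  nlinarith

theorem stmt_17 (ε α₀ α₁ L : ℝ) (hε : ε ∈ Set.Ioo (0:ℝ) (1/2))
    (hL : L = Real.log ((1 - ε) / ε)) (hα₁ : α₁ > L)
    (hα₀ : α₀ ≥ (1 / (2 * ε)) * Real.log ((α₁ + L) / (α₁ - L))) :
    (∀ x : ℝ, x ≥ ε → α₁ * Real.tanh (α₀ * x) ≥ L) ∧
    Real.tanh (α₀ * ε) ≥ L / α₁ := by
  obtain ⟨hε0, hε2⟩ := hε
  have hL0 : L > 0 := by
    rw [hL]
    apply Real.log_pos
    rw [lt_div_iff₀ hε0]; linarith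
  have hα₁0 : α₁ > 0 := lt_trans hL0 hα₁
  have hsub : α₁ - L > 0 := by linarith
  have hr1 : (1:ℝ) ≤ (α₁ + L) / (α₁ - L) := by
    rw [le_div_iff₀ hsub]; linarith
  have hlog0 : Real.log ((α₁ + L) / (α₁ - L)) ≥ 0 :=
    Real.log_nonneg hr1
  have hα₀0 : α₀ ≥ 0 := le_trans (by positivity) hα₀
  have key : ∀ t : ℝ, t ≥ α₀ * ε → Real.tanh t ≥ L / α₁ := by
    intro t ht
    have hc1 : L / α₁ < 1 := by
      rw [div_lt_one hα₁0]; exact hα₁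
    apply tanh_ge_of_exp hc1
    have hq : (1 + L / α₁) / (1 - L / α₁) = (α₁ + L) / (α₁ - L) := by
      have h1c : (0:ℝ) < 1 - L/α₁ := by rw [sub_pos, div_lt_one hα₁0]; exact hα₁
      rw [div_eq_div_iff (ne_of_gt h1c) (ne_of_gt hsub)]
      field_simp
    rw [hq]
    calc (α₁ + L) / (α₁ - L) = Real.exp (Real.log ((α₁ + L) / (α₁ - L))) := by
            rw [Real.exp_log]; positivity
      _ ≤ Real.exp (2*t) := by
            apply Real.exp_le_exp.mpr
            have h2ε : (0:ℝ) < 2 * ε := by linarith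
            rw [ge_iff_le, div_mul_eq_mul_div, one_mul, div_le_iff₀ h2ε] at hα₀
            nlinarith
  constructor
  · intro x hx
    have : Real.tanh (α₀ * x) ≥ L / α₁ := key _ (by nlinarith)
    calc L = α₁ * (L / α₁) := by field_simp
      _ ≤ α₁ * Real.tanh (α₀ * x) := by
          apply mul_le_mul_of_nonneg_left this (le_of_lt hα₁0)
  · exact key _ (le_refl _)
end
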